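/- Let AI be the chain complex of F2[U]-modules freely generated over F2[U] by a, w, c, e, x, Qa, Qw, Qc, Qe, Qx, with differential D(a) = w + c + Qx, D(w) = Ue + Q(c + w), D(c) = Ue + Q(w + c), D(x) = Qe, D(e) = 0, D(Qa) = Qw + Qc, D(Qw) = QUe, D(Qc) = QUe, D(Qx) = D(Qe) = 0, and gradings gr(a) = gr(e) = gr(x) = 1, gr(w) = gr(c) = 0, gr(Qa) = gr(Qe) = gr(Qx) = 0, gr(Qw) = gr(Qc) = -1 (U lowers gr by 2, D lowers gr by 1). (This is the involutive mapping cone AI_0^- for the figure-eight knot 4_1, with w = Ub.) Then H(AI) ≅ F2[U]·[Ux + Qc] ⊕ F2[U]·[Qx] ⊕ F2·[e], where [Ux + Qc] (grading -1) and [Qx] (grading 0) generate free F2[U]-summands and [e] is a U-torsion class in grading 1. Consequently V̲_0(4_1) = -(1/2)((-1) - 1) = 1 and V̄_0(4_1) = -(1/2)(0) = 0. -/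

import Mathlib

/- STATEMENT 6: the involutive mapping cone AI_0^- of the figure-eight knot
4_1 (generators a, w = Ub, c, e, x, Qa, Qw, Qc, Qe, Qx with
D(a) = w + c + Qx, D(w) = Ue + Q(c+w), D(c) = Ue + Q(w+c), D(x) = Qe,
D(e) = 0, D(Qa) = Qw + Qc, D(Qw) = QUe, D(Qc) = QUe, D(Qx) = D(Qe) = 0,
gradings gr(a) = gr(e) = gr(x) = 1, gr(w) = gr(c) = 0, gr(Qa) = gr(Qe) =
gr(Qx) = 0, gr(Qw) = gr(Qc) = -1) has homology
F2[U]·[Ux + Qc] ⊕ F2[U]·[Qx] ⊕ F2·[e]; consequently V̲_0(4_1) = 1 and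
V̄_0(4_1) = 0. -/

open Polynomial

noncomputable section

/-- F2[U] -/
abbrev R2 : Type := Polynomial (ZMod 2)

/-- the variable U -/
def UU : R2 := Polynomial.X

/-- the i-th free generator -/
def gen {n : ℕ} (i : Fin n) : Fin n → R2 := Pi.single i 1

/-- the F2[U]-linear map sending the i-th generator to `v i` -/
def mkD {n : ℕ} (v : Fin n → (Fin n → R2)) : (Fin n → R2) →ₗ[R2] (Fin n → R2) :=
  (Pi.basisFun R2 (Fin n)).constr ℕ v

/-- `x` is homogeneous of degree `r`, where the i-th generator has
degree `M i` and multiplication by U lowers degree by 2. -/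
def Homog {n : ℕ} (M : Fin n → ℤ) (r : ℤ) (x : Fin n → R2) : Prop :=
  ∀ i : Fin n, ∀ k : ℕ, (x i).coeff k ≠ 0 → M i - 2 * (k : ℤ) = r

/- generators: a = 0, w = 1, c = 2, e = 3, x = 4,
               Qa = 5, Qw = 6, Qc = 7, Qe = 8, Qx = 9 -/

/-- the differential D of AI_0^-(4_1) -/
def D : (Fin 10 → R2) →ₗ[R2] (Fin 10 → R2) :=
  mkD ![gen 1 + gen 2 + gen 9,          -- a ↦ w + c + Qx
        UU • gen 3 + gen 7 + gen 6,     -- w ↦ Ue + Q(c + w)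
        UU • gen 3 + gen 6 + gen 7,     -- c ↦ Ue + Q(w + c)
        0,                              -- e ↦ 0
        gen 8,                          -- x ↦ Qe
        gen 6 + gen 7,                  -- Qa ↦ Qw + Qc
        UU • gen 8,                     -- Qw ↦ QUe
        UU • gen 8,                     -- Qc ↦ QUe
        0, 0]                           -- Qe, Qx ↦ 0

/-- the action of Q: Q·(ξ + Qη) = Qξ -/
def Qm : (Fin 10 → R2) →ₗ[R2] (Fin 10 → R2) :=
  mkD ![gen 5, gen 6, gen 7, gen 8, gen 9, 0, 0, 0, 0, 0]

/-- gradings -/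
def gr : Fin 10 → ℤ := ![1, 0, 0, 1, 1, 0, -1, -1, 0, 0]

-- helpers
lemma mkD_apply {n : ℕ} (v : Fin n → (Fin n → R2)) (z : Fin n → R2) :
    mkD v z = ∑ i, z i • v i := by
  simp [mkD, Module.Basis.constr_apply_fintype, Pi.basisFun_equivFun]

lemma sum10 {M : Type*} [AddCommMonoid M] (f : Fin 10 → M) :
    ∑ i, f i = f 0 + f 1 + f 2 + f 3 + f 4 + f 5 + f 6 + f 7 + f 8 + f 9 := by
  rw [Fin.sum_univ_castSucc, Fin.sum_univ_castSucc, Fin.sum_univ_eight]; rfl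

section
variable {α : Type*} (a b c d e f g h i j : α)
lemma cv5 : ![a,b,c,d,e,f,g,h,i,j] (5:Fin 10) = f := rfl
lemma cv6 : ![a,b,c,d,e,f,g,h,i,j] (6:Fin 10) = g := rfl
lemma cv7 : ![a,b,c,d,e,f,g,h,i,j] (7:Fin 10) = h := rfl
lemma cv8 : ![a,b,c,d,e,f,g,h,i,j] (8:Fin 10) = i := rfl
lemma cv9 : ![a,b,c,d,e,f,g,h,i,j] (9:Fin 10) = j := rfl
end

lemma aself (a : R2) : a + a = 0 := CharTwo.add_self_eq_zero a
lemma two0 : (2 : R2) = 0 := CharTwo.two_eq_zero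
lemma addc {R : Type*} [Ring R] [CharP R 2] {a b : R} : a + b = 0 ↔ a = b := by
  rw [← CharTwo.sub_eq_add, sub_eq_zero]

lemma D_apply (z : Fin 10 → R2) :
    D z = ![0, z 0, z 0, UU*(z 1 + z 2), 0, 0, z 1 + z 2 + z 5, z 1 + z 2 + z 5,
            z 4 + UU*(z 6 + z 7), z 0] := by
  rw [D, mkD_apply, sum10]
  funext j
  fin_cases j <;>
    simp [gen, Pi.single_apply, cv5, cv6, cv7, cv8, cv9, smul_eq_mul, mul_comm] <;> ring

lemma Qm_apply (z : Fin 10 → R2) :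
    Qm z = ![0, 0, 0, 0, 0, z 0, z 1, z 2, z 3, z 4] := by
  rw [Qm, mkD_apply, sum10]
  funext j
  fin_cases j <;> simp [gen, Pi.single_apply, cv5, cv6, cv7, cv8, cv9]

lemma ker_char (z : Fin 10 → R2) (hz : D z = 0) :
    z 0 = 0 ∧ z 2 = z 1 ∧ z 5 = 0 ∧ z 4 = UU * (z 6 + z 7) := by
  rw [D_apply] at hz
  have h1 := congrFun hz 1
  have h3 := congrFun hz 3
  have h6 := congrFun hz 6
  have h8 := congrFun hz 8
  simp [cv5, cv6, cv7, cv8, cv9] at h1 h3 h6 h8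
  have hX : (UU : R2) ≠ 0 := Polynomial.X_ne_zero
  have h12 : z 1 + z 2 = 0 := by
    rcases h3 with h | h
    · exact absurd h hX
    · exact h
  have h21 : z 2 = z 1 := (addc.mp h12).symm
  refine ⟨h1, h21, ?_, ?_⟩
  · rw [h21, aself, zero_add] at h6; exact h6
  · exact addc.mp h8

lemma hdivX (p : R2) : p + C (p.coeff 0) = UU * p.divX := by
  calc p + C (p.coeff 0) = (X * p.divX + C (p.coeff 0)) + C (p.coeff 0) := by
        rw [Polynomial.X_mul_divX_add]
    _ = UU * p.divX := by rw [add_assoc, aself, add_zero, UU]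

lemma A_cycle : D (UU • gen 4 + gen 7) = 0 := by
  rw [D_apply]
  funext j
  fin_cases j <;> simp [gen, Pi.single_apply, cv5, cv6, cv7, cv8, cv9, aself]

lemma gen9_cycle : D (gen 9 : Fin 10 → R2) = 0 := by
  rw [D_apply]
  funext j
  fin_cases j <;> simp [gen, Pi.single_apply, cv5, cv6, cv7, cv8, cv9]

lemma gen3_cycle : D (gen 3 : Fin 10 → R2) = 0 := by
  rw [D_apply]
  funext j
  fin_cases j <;> simp [gen, Pi.single_apply, cv5, cv6, cv7, cv8, cv9]

lemma DD_zero : D ∘ₗ D = 0 := by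
  apply LinearMap.ext
  intro z
  rw [LinearMap.comp_apply, D_apply z, D_apply, LinearMap.zero_apply]
  funext j
  fin_cases j <;> simp [cv5, cv6, cv7, cv8, cv9, aself]

lemma HomA : Homog gr (-1) (UU • gen 4 + gen 7) := by
  intro i k h
  fin_cases i <;>
    simp [gen, Pi.single_apply, UU, gr, cv5, cv6, cv7, cv8, cv9,
      Polynomial.coeff_X, Polynomial.coeff_one] at h ⊢ <;> omega

lemma Hom9 : Homog gr 0 (gen 9 : Fin 10 → R2) := by
  intro i k h
  fin_cases i <;>
    simp [gen, Pi.single_apply, gr, cv5, cv6, cv7, cv8, cv9, Polynomial.coeff_one] at h ⊢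
  omega

lemma Hom3 : Homog gr 1 (gen 3 : Fin 10 → R2) := by
  intro i k h
  fin_cases i <;>
    simp [gen, Pi.single_apply, gr, cv5, cv6, cv7, cv8, cv9, Polynomial.coeff_one] at h ⊢
  omega

lemma Ue_bdry : UU • gen 3 ∈ LinearMap.range D := by
  refine ⟨![0,1,0,0,0,1,0,0,0,0], ?_⟩
  rw [D_apply]
  funext j
  fin_cases j <;>
    simp [gen, Pi.single_apply, cv5, cv6, cv7, cv8, cv9, aself]

lemma bdry_coords (y v : Fin 10 → R2) (h : D y = v) :
    v 4 = 0 ∧ v 1 = v 9 ∧ (v 3).coeff 0 = 0 := by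
  rw [D_apply] at h
  have h4 := congrFun h 4
  have h1 := congrFun h 1
  have h9 := congrFun h 9
  have h3 := congrFun h 3
  simp [cv5, cv6, cv7, cv8, cv9] at h4 h1 h9 h3
  refine ⟨h4.symm, by rw [← h1, ← h9], ?_⟩
  rw [← h3, UU, Polynomial.mul_coeff_zero, Polynomial.coeff_X_zero, zero_mul]

lemma homology (z : Fin 10 → R2) (hz : D z = 0) :
    ∃! t : R2 × R2 × ZMod 2,
      z + t.1 • (UU • gen 4 + gen 7) + t.2.1 • gen 9
        + (Polynomial.C t.2.2) • gen 3 ∈ LinearMap.range D := by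
  obtain ⟨h0, h2, h5, h4⟩ := ker_char z hz
  refine ⟨(z 6 + z 7, z 1 + z 9, (z 3).coeff 0), ?_, ?_⟩
  · refine ⟨![z 1, (z 3).divX, 0, 0, z 8, (z 3).divX + z 6, 0, 0, 0, 0], ?_⟩
    rw [D_apply]
    funext j
    fin_cases j <;>
      simp [gen, Pi.single_apply, cv5, cv6, cv7, cv8, cv9, h0, h2, h5, h4, hdivX] <;>
      (ring_nf; simp [two0]) <;> ring_nf
  · rintro ⟨s1, s2, s3⟩ ⟨y, hy⟩
    obtain ⟨c4, c19, c3⟩ := bdry_coords y _ hy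
    simp [gen, Pi.single_apply, cv5, cv6, cv7, cv8, cv9] at c4 c19 c3
    have e1 : s1 = z 6 + z 7 := by
      rw [h4] at c4
      have : UU * ((z 6 + z 7) + s1) = 0 := by ring_nf; ring_nf at c4; linear_combination c4
      rcases mul_eq_zero.mp this with h | h
      · exact absurd h Polynomial.X_ne_zero
      · rw [add_comm] at h; exact addc.mp h
    have e2 : s2 = z 1 + z 9 := by
      have : s2 + (z 1 + z 9) = 0 := by linear_combination -c19 + z 1 * two0
      exact addc.mp this
    have e3 : s3 = (z 3).coeff 0 := by
      have h2zm : (2 : ZMod 2) = 0 := rfl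
      have : s3 + (z 3).coeff 0 = 0 := by linear_combination c3
      exact addc.mp this
    simp [e1, e2, e3]

lemma Xpow_ne (n : ℕ) : (UU : R2) ^ n ≠ 0 := pow_ne_zero n Polynomial.X_ne_zero

/-- the key boundary construction used in both upper bounds -/
lemma Uz_bdry (z : Fin 10 → R2) (h0 : z 0 = 0) (h2 : z 2 = z 1) (h5 : z 5 = 0)
    (h40 : z 4 = 0) (h67 : z 6 = z 7) (h19 : z 1 = z 9) :
    UU • z ∈ LinearMap.range D := by
  refine ⟨![UU * z 1, z 3, 0, 0, UU * z 8, z 3 + UU * z 6, 0, 0, 0, 0], ?_⟩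
  rw [D_apply]
  funext j
  fin_cases j <;>
    simp [cv5, cv6, cv7, cv8, cv9, h0, h2, h5, h40, ← h67, ← h19] <;>
    (ring_nf; simp [two0]) <;> ring_nf

lemma Vlower : IsGreatest {r : ℤ | ∃ z : Fin 10 → R2, D z = 0 ∧ Homog gr r z ∧
    ∀ n : ℕ, UU ^ n • z ∉ LinearMap.range D ∧
      ¬ ∃ w : Fin 10 → R2, D w = 0 ∧ UU ^ n • z + Qm w ∈ LinearMap.range D} (-1) := by
  constructor
  · refine ⟨UU • gen 4 + gen 7, A_cycle, HomA, fun n => ⟨?_, ?_⟩⟩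
    · rintro ⟨y, hy⟩
      have h4 := congrFun hy 4
      rw [D_apply] at h4
      simp [gen, Pi.single_apply, cv5, cv6, cv7, cv8, cv9] at h4
      exact Polynomial.X_ne_zero (h4.elim And.left id)
    · rintro ⟨w, hw, y, hy⟩
      have h4 := congrFun hy 4
      rw [D_apply, Qm_apply] at h4
      simp [gen, Pi.single_apply, cv5, cv6, cv7, cv8, cv9] at h4
      exact Polynomial.X_ne_zero (h4.elim And.left id)
  · rintro r ⟨z, hz, hhom, hprop⟩
    obtain ⟨h0, h2, h5, h4⟩ := ker_char z hz
    by_cases h67 : z 6 = z 7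
    · exfalso
      apply (hprop 1).2
      have h40 : z 4 = 0 := by rw [h4, ← h67, aself, mul_zero]
      refine ⟨![0,0,0,0,UU*(z 1 + z 9),0,0,z 1 + z 9,0,0], ?_, ?_⟩
      · rw [D_apply]
        funext j
        fin_cases j <;> simp [cv5, cv6, cv7, cv8, cv9, aself]
      · have : UU ^ 1 • z + Qm ![0,0,0,0,UU*(z 1 + z 9),0,0,z 1 + z 9,0,0]
            = UU • (z + (z 1 + z 9) • gen 9) := by
          rw [Qm_apply]
          funext j
          fin_cases j <;>
            simp [gen, Pi.single_apply, cv5, cv6, cv7, cv8, cv9] <;>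
            (try (ring_nf; simp [two0])) <;> (try ring_nf)
        rw [this]
        apply Uz_bdry <;>
          simp [gen, Pi.single_apply, h0, h2, h5, h40, h67] <;>
          (try (ring_nf; simp [two0]))
    · obtain ⟨k, hk⟩ : ∃ k, (z 6).coeff k ≠ (z 7).coeff k := by
        by_contra h
        push_neg at h
        exact h67 (Polynomial.ext h)
      have hr : r = -1 - 2 * (k : ℤ) := by
        rcases ne_or_eq ((z 6).coeff k) 0 with h | h
        · have := hhom 6 k h
          simp [gr, cv6] at this
          omega
        · have h7 : (z 7).coeff k ≠ 0 := by rw [h] at hk; exact hk.symm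
          have := hhom 7 k h7
          simp [gr, cv7] at this
          omega
      omega

lemma Vupper : IsGreatest {r : ℤ | ∃ z : Fin 10 → R2, D z = 0 ∧ Homog gr r z ∧
    (∀ n : ℕ, UU ^ n • z ∉ LinearMap.range D) ∧
    ∃ m : ℕ, ∃ w : Fin 10 → R2, D w = 0 ∧
      UU ^ m • z + Qm w ∈ LinearMap.range D} 0 := by
  constructor
  · refine ⟨gen 9, gen9_cycle, Hom9, ?_, 1, UU • gen 4 + gen 7, A_cycle, 0, ?_⟩
    · rintro n ⟨y, hy⟩
      have h1 := congrFun hy 1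
      have h9 := congrFun hy 9
      rw [D_apply] at h1 h9
      simp [gen, Pi.single_apply, cv5, cv6, cv7, cv8, cv9] at h1 h9
      exact Xpow_ne n (h9 ▸ h1)
    · rw [map_zero, Qm_apply]
      funext j
      fin_cases j <;>
        simp [gen, Pi.single_apply, cv5, cv6, cv7, cv8, cv9, aself]
  · rintro r ⟨z, hz, hhom, hU, m, w, hw, y, hy⟩
    obtain ⟨h0, h2, h5, h4⟩ := ker_char z hz
    have hy4 := congrFun hy 4
    rw [D_apply, Qm_apply] at hy4
    simp [cv5, cv6, cv7, cv8, cv9] at hy4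
    have h40 : z 4 = 0 := hy4.elim (fun h => absurd h.1 Polynomial.X_ne_zero) id
    have h67 : z 6 = z 7 := by
      rw [h40] at h4
      rcases mul_eq_zero.mp h4.symm with h | h
      · exact absurd h Polynomial.X_ne_zero
      · exact addc.mp h
    have h19 : z 1 ≠ z 9 := by
      intro h19
      apply hU 1
      rw [pow_one]
      exact Uz_bdry z h0 h2 h5 h40 h67 h19
    obtain ⟨k, hk⟩ : ∃ k, (z 1).coeff k ≠ (z 9).coeff k := by
      by_contra h
      push_neg at h
      exact h19 (Polynomial.ext h)
    have hr : r = -2 * (k : ℤ) := by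
      rcases ne_or_eq ((z 1).coeff k) 0 with h | h
      · have := hhom 1 k h
        simp [gr] at this
        omega
      · have h9 : (z 9).coeff k ≠ 0 := by rw [h] at hk; exact hk.symm
        have := hhom 9 k h9
        simp [gr, cv9] at this
        omega
    omega


theorem stmt_6 :
    -- AI is a chain complex
    D ∘ₗ D = 0 ∧
    -- Ux + Qc is a cycle, homogeneous of grading -1
    D (UU • gen 4 + gen 7) = 0 ∧ Homog gr (-1) (UU • gen 4 + gen 7) ∧
    -- Qx is a cycle, homogeneous of grading 0
    D (gen 9) = 0 ∧ Homog gr 0 (gen 9) ∧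
    -- e is a cycle, homogeneous of grading 1
    D (gen 3) = 0 ∧ Homog gr 1 (gen 3) ∧
    -- [e] is U-torsion: U·[e] = 0
    UU • gen 3 ∈ LinearMap.range D ∧
    -- H(AI) ≅ F2[U]·[Ux + Qc] ⊕ F2[U]·[Qx] ⊕ F2·[e]
    (∀ z : Fin 10 → R2, D z = 0 →
      ∃! t : R2 × R2 × ZMod 2,
        z + t.1 • (UU • gen 4 + gen 7) + t.2.1 • gen 9
          + (Polynomial.C t.2.2) • gen 3 ∈ LinearMap.range D) ∧
    -- V̲_0: max{ r : ∃ z ∈ H_r, U^n z ≠ 0 and U^n z ∉ Im Q for all n } = -1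
    IsGreatest {r : ℤ | ∃ z : Fin 10 → R2, D z = 0 ∧ Homog gr r z ∧
      ∀ n : ℕ, UU ^ n • z ∉ LinearMap.range D ∧
        ¬ ∃ w : Fin 10 → R2, D w = 0 ∧ UU ^ n • z + Qm w ∈ LinearMap.range D}
      (-1) ∧
    (-(1 : ℚ) / 2) * ((-1) - 1) = 1 ∧
    -- V̄_0: max{ r : ∃ z ∈ H_r, U^n z ≠ 0 for all n, and U^m z ∈ Im Q for some m } = 0
    IsGreatest {r : ℤ | ∃ z : Fin 10 → R2, D z = 0 ∧ Homog gr r z ∧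
      (∀ n : ℕ, UU ^ n • z ∉ LinearMap.range D) ∧
      ∃ m : ℕ, ∃ w : Fin 10 → R2, D w = 0 ∧
        UU ^ m • z + Qm w ∈ LinearMap.range D} 0 ∧
    (-(1 : ℚ) / 2) * 0 = 0 := by
  exact ⟨DD_zero, A_cycle, HomA, gen9_cycle, Hom9, gen3_cycle, Hom3, Ue_bdry,
    homology, Vlower, by norm_num, Vupper, by norm_num⟩
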